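/- Let R be a reduced crystallographic root system with simple roots S, let I be a subset of S, and let w_{0,P} be the longest element of the subgroup W_P of the Weyl group generated by the simple reflections s_α, α ∈ I. For β ∈ R⁺ \ R_I⁺, one has ⟨Σ_{α ∈ I} ϖ_α − Σ_{γ ∈ R_I⁺} γ , β∨⟩ = 0 if and only if w_{0,P}(β) ∈ R_{S\I}⁺ (i.e., w_{0,P}(β) is a positive root lying in the span of the simple roots not in I). -/

import Mathlib

/-!
Common setup: a reduced crystallographic root system realized in a real inner
product space, together with a chosen set of simple roots.  For a root `α`,
`cpair v α = ⟨v, α∨⟩ = 2⟪v,α⟫/⟪α,α⟫` is the pairing with the coroot `α∨`, and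
`sref α` is the reflection in `α`.
-/

open scoped RealInnerProductSpace
open Finset

/-- `cpair v α = ⟨v, α∨⟩ = 2⟪v,α⟫/⟪α,α⟫`, the pairing of `v` with the coroot of `α`. -/
noncomputable def cpair {V : Type*} [NormedAddCommGroup V] [InnerProductSpace ℝ V]
    (v α : V) : ℝ := 2 * ⟪v, α⟫ / ⟪α, α⟫

/-- The reflection in the root `α`: `v ↦ v - ⟨v, α∨⟩ α`. -/
noncomputable def sref {V : Type*} [NormedAddCommGroup V] [InnerProductSpace ℝ V]
    (α : V) : V → V := fun v => v - cpair v α • α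

/-- A reduced crystallographic root system in a real inner product space,
with a chosen set of simple roots (every root is an integral linear combination
of the simple roots, with coefficients all nonnegative or all nonpositive). -/
structure RCRS (V : Type*) [NormedAddCommGroup V] [InnerProductSpace ℝ V] where
  roots : Finset V
  zero_not_mem : (0 : V) ∉ roots
  crystallographic : ∀ α ∈ roots, ∀ β ∈ roots, ∃ n : ℤ, cpair β α = (n : ℝ)
  reflect_mem : ∀ α ∈ roots, ∀ β ∈ roots, sref α β ∈ roots
  reduced : ∀ α ∈ roots, ∀ t : ℝ, t • α ∈ roots → t = 1 ∨ t = -1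
  simple : Finset V
  simple_subset : simple ⊆ roots
  simple_indep : LinearIndependent ℝ ((↑) : simple → V)
  exists_coeffs : ∀ β ∈ roots, ∃ c : V → ℤ,
    ((∀ α ∈ simple, 0 ≤ c α) ∨ (∀ α ∈ simple, c α ≤ 0)) ∧
    β = ∑ α ∈ simple, (c α : ℝ) • α

namespace RCRS

variable {V : Type*} [NormedAddCommGroup V] [InnerProductSpace ℝ V] [DecidableEq V] (Φ : RCRS V)

open Classical in
/-- `R⁺`: the set of positive roots, i.e. the roots that are nonnegative integral
linear combinations of simple roots. -/
noncomputable def posRoots : Finset V :=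
  Φ.roots.filter (fun β => ∃ c : V → ℤ, (∀ α ∈ Φ.simple, 0 ≤ c α) ∧
    β = ∑ α ∈ Φ.simple, (c α : ℝ) • α)

open Classical in
/-- `R_I⁺`: the set of positive roots that are integral linear combinations of the
simple roots belonging to `I`. -/
noncomputable def posRootsOf (I : Finset V) : Finset V :=
  Φ.posRoots.filter (fun β => ∃ c : V → ℤ, β = ∑ α ∈ I, (c α : ℝ) • α)

/-- `ρ`: the half sum of the positive roots. -/
noncomputable def rho : V := (2 : ℝ)⁻¹ • ∑ β ∈ Φ.posRoots, β

/-- `ρ^P`: the half sum of the positive roots that are not in `R_I⁺`. -/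
noncomputable def rhoP (I : Finset V) : V :=
  (2 : ℝ)⁻¹ • ∑ β ∈ Φ.posRoots \ Φ.posRootsOf I, β

/-- `ϖ` is a system of fundamental weights: `⟨ϖ α, β∨⟩ = δ_{α β}` for simple `α`, `β`. -/
def IsFundamentalWeights (ϖ : V → V) : Prop :=
  ∀ α ∈ Φ.simple, ∀ β ∈ Φ.simple, cpair (ϖ α) β = if α = β then 1 else 0

/-- The product of the reflections in the roots listed in `l`
(`wordProd [α₁, …, α_N] = s_{α₁} ∘ ⋯ ∘ s_{α_N}`). -/
noncomputable def wordProd : List V → (V → V) :=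
  fun l => l.foldr (fun α f => sref α ∘ f) id

/-- Membership in the subgroup of the Weyl group generated by the reflections
`s_α`, `α ∈ I`. -/
def MemWeyl (I : Finset V) (w : V → V) : Prop :=
  ∃ l : List V, (∀ α ∈ l, α ∈ I) ∧ w = wordProd l

/-- The length of `w` with respect to the generators `s_α`, `α ∈ I`. -/
noncomputable def lengthWeyl (I : Finset V) (w : V → V) : ℕ :=
  sInf {n | ∃ l : List V, l.length = n ∧ (∀ α ∈ l, α ∈ I) ∧ w = wordProd l}

/-- `w` is the longest element of the subgroup generated by the reflections
`s_α`, `α ∈ I`. -/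
def IsLongest (I : Finset V) (w : V → V) : Prop :=
  MemWeyl I w ∧ ∀ u, MemWeyl I u → lengthWeyl I u ≤ lengthWeyl I w

end RCRS

/-!
Write `W = ∑_{α ∈ I} ϖ_α` and `ρ = ∑ R_I⁺`. For `α ∈ I` we have `⟨W, α∨⟩ = 1` and `⟨ρ, α∨⟩ = 2`,
so `2W - ρ` is orthogonal to `I` and fixed by `w = w_{0,P}`, while `w ρ = -ρ` because the longest
element maps the simple roots of `I`, hence the cone they span, into `-R_I⁺`. Thus `w (W - ρ) = W`,
and as `w` is orthogonal, `⟨W - ρ, β∨⟩ = ⟨W, (w β)∨⟩`. Since `w β - β ∈ span I` and `β ∉ R_I⁺`, the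
root `w β` keeps the positive coefficients of `β` outside `I` and is positive. Finally, for a
positive root `γ`, `⟨W, γ∨⟩` is a positive multiple of `∑_{α ∈ I} c_α ⟪α, α⟫` where the `c_α ≥ 0`
are its coefficients, so it vanishes iff `γ ∈ R_{S∖I}⁺`.
-/

section Reflection

variable {V : Type*} [NormedAddCommGroup V] [InnerProductSpace ℝ V]

lemma cpair_add_left (u v α : V) : cpair (u + v) α = cpair u α + cpair v α := by
  simp only [cpair, inner_add_left]; ring

lemma cpair_sub_left (u v α : V) : cpair (u - v) α = cpair u α - cpair v α := by
  simp only [cpair, inner_sub_left]; ring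

lemma cpair_smul_left (r : ℝ) (v α : V) : cpair (r • v) α = r * cpair v α := by
  simp only [cpair, real_inner_smul_left]; ring

lemma cpair_sum_left {ι : Type*} (s : Finset ι) (v : ι → V) (α : V) :
    cpair (∑ i ∈ s, v i) α = ∑ i ∈ s, cpair (v i) α := by
  simp only [cpair, sum_inner, Finset.mul_sum, Finset.sum_div]

lemma cpair_self {α : V} (hα : α ≠ 0) : cpair α α = 2 := by
  rw [cpair, mul_div_assoc, div_self ((inner_self_ne_zero (𝕜 := ℝ)).mpr hα), mul_one]

lemma cpair_eq_zero_iff_inner_eq_zero (v α : V) : cpair v α = 0 ↔ ⟪v, α⟫ = 0 := by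
  by_cases hα : α = 0 <;> simp [cpair, hα]

lemma real_inner_eq_cpair_mul (v α : V) : ⟪v, α⟫ = cpair v α * (⟪α, α⟫ / 2) := by
  by_cases hα : α = 0
  · simp [hα]
  · have := (inner_self_ne_zero (𝕜 := ℝ)).mpr hα
    rw [cpair]
    field_simp

lemma sref_self {α : V} (hα : α ≠ 0) : sref α α = -α := by
  simp only [sref, cpair_self hα]; module

lemma sref_sref (α v : V) : sref α (sref α v) = v := by
  by_cases hα : α = 0
  · simp [sref, hα]
  · simp only [sref, cpair_sub_left, cpair_smul_left, cpair_self hα]; module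

lemma inner_sref_sref (α u v : V) : ⟪sref α u, sref α v⟫ = ⟪u, v⟫ := by
  by_cases hα : α = 0
  · simp [sref, hα]
  · have := (inner_self_ne_zero (𝕜 := ℝ)).mpr hα
    simp only [sref, cpair, inner_sub_left, inner_sub_right, real_inner_smul_left,
      real_inner_smul_right, real_inner_comm α u, real_inner_comm α v]
    field_simp
    ring

/-- Defined for every `α`: `sref 0 = id`, as `cpair v 0 = 0` by division by zero. -/
noncomputable def srefLinearIsometry (α : V) : V →ₗᵢ[ℝ] V :=
  LinearMap.isometryOfInner
    { toFun := sref α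
      map_add' := fun u v => by simp only [sref, cpair_add_left]; module
      map_smul' := fun r v => by simp only [sref, cpair_smul_left, RingHom.id_apply]; module }
    (inner_sref_sref α)

@[simp]
lemma coe_srefLinearIsometry (α : V) : ⇑(srefLinearIsometry α) = sref α := rfl

lemma LinearIsometry.cpair_map (f : V →ₗᵢ[ℝ] V) (u v : V) : cpair (f u) (f v) = cpair u v := by
  simp only [cpair, f.inner_map_map]

lemma LinearIsometry.map_sref (f : V →ₗᵢ[ℝ] V) (α v : V) : f (sref α v) = sref (f α) (f v) := by
  simp only [sref, map_sub, map_smul, f.cpair_map]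

end Reflection

lemma Finset.sum_apply_eq_sum_self {M : Type*} [AddCommMonoid M] {s : Finset M} {f : M → M}
    (hf : ∀ x ∈ s, f x ∈ s) (hinj : Set.InjOn f s) : ∑ x ∈ s, f x = ∑ x ∈ s, x :=
  Finset.sum_nbij f hf hinj ((s.finite_toSet.injOn_iff_bijOn_of_mapsTo hf).mp hinj).surjOn
    fun _ _ => rfl

namespace RCRS

section Words

variable {V : Type*} [NormedAddCommGroup V] [InnerProductSpace ℝ V]

lemma wordProd_cons (γ : V) (l : List V) : wordProd (γ :: l) = sref γ ∘ wordProd l := rfl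

lemma wordProd_append (l₁ l₂ : List V) :
    wordProd (l₁ ++ l₂) = wordProd l₁ ∘ wordProd l₂ := by
  induction l₁ with
  | nil => rfl
  | cons γ l ih => rw [List.cons_append, wordProd_cons, wordProd_cons, ih]; rfl

lemma exists_linearIsometry_eq_wordProd (l : List V) : ∃ f : V →ₗᵢ[ℝ] V, ⇑f = wordProd l := by
  induction l with
  | nil => exact ⟨LinearIsometry.id, rfl⟩
  | cons γ l ih =>
    obtain ⟨f, hf⟩ := ih
    exact ⟨(srefLinearIsometry γ).comp f, by rw [wordProd_cons, ← hf]; rfl⟩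

lemma lengthWeyl_wordProd_le {I : Finset V} {l : List V} (hl : ∀ α ∈ l, α ∈ I) :
    lengthWeyl I (wordProd l) ≤ l.length :=
  Nat.sInf_le ⟨l, rfl, hl, rfl⟩

namespace MemWeyl

variable {I : Finset V} {w : V → V}

lemma exists_linearIsometry (hw : MemWeyl I w) : ∃ f : V →ₗᵢ[ℝ] V, ⇑f = w := by
  obtain ⟨l, -, rfl⟩ := hw
  exact exists_linearIsometry_eq_wordProd l

lemma exists_reduced_word (hw : MemWeyl I w) :
    ∃ l : List V, (∀ α ∈ l, α ∈ I) ∧ wordProd l = w ∧ l.length = lengthWeyl I w := by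
  obtain ⟨l, hl, hlI, hlw⟩ := Nat.sInf_mem (s := {n | ∃ l : List V, l.length = n ∧
    (∀ α ∈ l, α ∈ I) ∧ w = wordProd l}) (by obtain ⟨l, hl, rfl⟩ := hw; exact ⟨_, l, rfl, hl, rfl⟩)
  exact ⟨l, hlI, hlw.symm, hl⟩

lemma comp_sref (hw : MemWeyl I w) {α : V} (hα : α ∈ I) : MemWeyl I (w ∘ sref α) := by
  obtain ⟨l, hl, rfl⟩ := hw
  refine ⟨l ++ [α], fun γ hγ => ?_, by rw [wordProd_append]; rfl⟩
  rcases List.mem_append.mp hγ with h | h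
  · exact hl γ h
  · exact List.mem_singleton.mp h ▸ hα

lemma apply_sub_mem_span (hw : MemWeyl I w) (v : V) :
    w v - v ∈ Submodule.span ℝ (I : Set V) := by
  obtain ⟨l, hl, rfl⟩ := hw
  induction l with
  | nil => simp [wordProd]
  | cons γ l ih =>
    rw [wordProd_cons, Function.comp_apply, sref, sub_right_comm]
    exact Submodule.sub_mem _ (ih fun α h => hl α (List.mem_cons_of_mem γ h))
      (Submodule.smul_mem _ _ (Submodule.subset_span (hl γ List.mem_cons_self)))

lemma apply_eq_self (hw : MemWeyl I w) {v : V} (hv : ∀ α ∈ I, cpair v α = 0) : w v = v := by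
  obtain ⟨l, hl, rfl⟩ := hw
  induction l with
  | nil => rfl
  | cons γ l ih =>
    rw [wordProd_cons, Function.comp_apply, ih fun α h => hl α (List.mem_cons_of_mem γ h), sref,
      hv γ (hl γ List.mem_cons_self), zero_smul, sub_zero]

end MemWeyl

end Words

section Roots

variable {V : Type*} [NormedAddCommGroup V] [InnerProductSpace ℝ V] {Φ : RCRS V}
  {I : Finset V} {α β γ : V}

lemma mem_posRoots : β ∈ Φ.posRoots ↔ β ∈ Φ.roots ∧ ∃ c : V → ℤ, (∀ α ∈ Φ.simple, 0 ≤ c α) ∧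
    β = ∑ α ∈ Φ.simple, (c α : ℝ) • α := by
  classical exact Finset.mem_filter

lemma mem_posRootsOf : β ∈ Φ.posRootsOf I ↔ β ∈ Φ.posRoots ∧ ∃ c : V → ℤ,
    β = ∑ α ∈ I, (c α : ℝ) • α := by
  classical exact Finset.mem_filter

lemma ne_zero_of_mem_roots (hα : α ∈ Φ.roots) : α ≠ 0 :=
  fun h => Φ.zero_not_mem (h ▸ hα)

lemma neg_mem_roots (hα : α ∈ Φ.roots) : -α ∈ Φ.roots :=
  sref_self (ne_zero_of_mem_roots hα) ▸ Φ.reflect_mem α hα α hα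

lemma coeff_eq_of_sum_eq {f g : V → ℝ}
    (h : ∑ α ∈ Φ.simple, f α • α = ∑ α ∈ Φ.simple, g α • α) : ∀ α ∈ Φ.simple, f α = g α :=
  (linearIndepOn_finset_iffₛ (v := id)).mp Φ.simple_indep f g h

lemma sum_smul_mem_span_iff [DecidableEq V] {J : Finset V} (hJ : J ⊆ Φ.simple) (f : V → ℝ) :
    ∑ α ∈ Φ.simple, f α • α ∈ Submodule.span ℝ (J : Set V) ↔ ∀ α ∈ Φ.simple \ J, f α = 0 := by
  constructor
  · intro h α hα
    obtain ⟨g, hgJ, hg⟩ := Submodule.mem_span_finset.mp h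
    have hg0 : ∀ δ ∈ Φ.simple, δ ∉ J → g δ • δ = 0 := fun δ _ hδ => by
      rw [Function.notMem_support.mp fun h => hδ (hgJ h), zero_smul]
    rw [Finset.sum_subset hJ hg0] at hg
    rw [coeff_eq_of_sum_eq hg.symm α (Finset.mem_sdiff.mp hα).1]
    exact Function.notMem_support.mp fun h => (Finset.mem_sdiff.mp hα).2 (hgJ h)
  · intro h
    refine Submodule.sum_mem _ fun α hα => ?_
    by_cases hαJ : α ∈ J
    · exact Submodule.smul_mem _ _ (Submodule.subset_span hαJ)
    · rw [h α (Finset.mem_sdiff.mpr ⟨hα, hαJ⟩), zero_smul]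
      exact Submodule.zero_mem _

lemma mem_posRoots_of_coeff_pos {f : V → ℝ} (hβ : β ∈ Φ.roots)
    (hf : β = ∑ α ∈ Φ.simple, f α • α) (hγ : γ ∈ Φ.simple) (hpos : 0 < f γ) :
    β ∈ Φ.posRoots := by
  obtain ⟨c, hc | hc, hβc⟩ := Φ.exists_coeffs β hβ
  · exact mem_posRoots.mpr ⟨hβ, c, hc, hβc⟩
  · have := coeff_eq_of_sum_eq (hβc.symm.trans hf) γ hγ
    have : (c γ : ℝ) ≤ 0 := by exact_mod_cast hc γ hγ
    linarith

lemma mem_posRoots_of_mem_posRootsOf (hβ : β ∈ Φ.posRootsOf I) : β ∈ Φ.posRoots :=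
  (mem_posRootsOf.mp hβ).1

lemma mem_roots_of_mem_posRoots (hβ : β ∈ Φ.posRoots) : β ∈ Φ.roots :=
  (mem_posRoots.mp hβ).1

lemma neg_mem_posRoots_of_notMem (hβ : β ∈ Φ.roots) (h : β ∉ Φ.posRoots) : -β ∈ Φ.posRoots := by
  obtain ⟨c, hc | hc, hβc⟩ := Φ.exists_coeffs β hβ
  · exact absurd (mem_posRoots.mpr ⟨hβ, c, hc, hβc⟩) h
  · refine mem_posRoots.mpr ⟨neg_mem_roots hβ, -c, fun α hα => neg_nonneg.mpr (hc α hα), ?_⟩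
    simp only [hβc, ← Finset.sum_neg_distrib, Pi.neg_apply, Int.cast_neg, neg_smul]

lemma neg_notMem_posRoots (hβ : β ∈ Φ.posRoots) : -β ∉ Φ.posRoots := by
  intro hneg
  obtain ⟨hβr, c, hc, hβc⟩ := mem_posRoots.mp hβ
  obtain ⟨-, d, hd, hβd⟩ := mem_posRoots.mp hneg
  have hsum : ∑ α ∈ Φ.simple, ((c α : ℝ) + d α) • α = ∑ α ∈ Φ.simple, (0 : ℝ) • α := by
    simp only [add_smul, Finset.sum_add_distrib, ← hβc, ← hβd, zero_smul, Finset.sum_const_zero,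
      add_neg_cancel]
  have hc0 : ∀ α ∈ Φ.simple, (c α : ℝ) = 0 := fun α hα => by
    have h₁ := coeff_eq_of_sum_eq hsum α hα
    have h₂ : (0 : ℝ) ≤ c α := by exact_mod_cast hc α hα
    have h₃ : (0 : ℝ) ≤ d α := by exact_mod_cast hd α hα
    linarith
  refine ne_zero_of_mem_roots hβr ?_
  rw [hβc]
  exact Finset.sum_eq_zero fun α hα => by rw [hc0 α hα, zero_smul]

lemma mem_posRoots_of_mem_simple (hα : α ∈ Φ.simple) : α ∈ Φ.posRoots := by
  classical
  exact mem_posRoots_of_coeff_pos (f := fun δ => if δ = α then 1 else 0) (Φ.simple_subset hα)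
    (by simp [ite_smul, hα]) hα (by simp)

lemma mem_posRootsOf_iff (hI : I ⊆ Φ.simple) :
    β ∈ Φ.posRootsOf I ↔ β ∈ Φ.posRoots ∧ β ∈ Submodule.span ℝ (I : Set V) := by
  classical
  rw [mem_posRootsOf]
  refine and_congr_right fun hβ => ⟨?_, fun hspan => ?_⟩
  · rintro ⟨c, rfl⟩
    exact Submodule.sum_mem _ fun α hα => Submodule.smul_mem _ _ (Submodule.subset_span hα)
  · obtain ⟨-, c, -, hβc⟩ := mem_posRoots.mp hβ
    rw [hβc, sum_smul_mem_span_iff hI] at hspan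
    refine ⟨c, hβc.trans (Finset.sum_subset hI fun α hα hαI => ?_).symm⟩
    rw [hspan α (Finset.mem_sdiff.mpr ⟨hα, hαI⟩), zero_smul]

lemma mem_posRootsOf_of_mem (hI : I ⊆ Φ.simple) (hα : α ∈ I) : α ∈ Φ.posRootsOf I :=
  (mem_posRootsOf_iff hI).mpr ⟨mem_posRoots_of_mem_simple (hI hα), Submodule.subset_span hα⟩

/-- Translating a positive root outside `span I` by an element of `span I` does not change its
coefficients outside `I`, so a root obtained this way is still positive. -/
lemma add_mem_posRoots (hI : I ⊆ Φ.simple) (hβ : β ∈ Φ.posRoots)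
    (hβI : β ∉ Submodule.span ℝ (I : Set V)) {x : V} (hx : x ∈ Submodule.span ℝ (I : Set V))
    (hβx : β + x ∈ Φ.roots) : β + x ∈ Φ.posRoots := by
  classical
  obtain ⟨-, c, hc, hβc⟩ := mem_posRoots.mp hβ
  obtain ⟨g, hgI, hxg⟩ := Submodule.mem_span_finset.mp hx
  have hg0 : ∀ α ∉ I, g α = 0 := fun α hα => Function.notMem_support.mp fun h => hα (hgI h)
  obtain ⟨γ, hγ, hcγ⟩ : ∃ γ ∈ Φ.simple \ I, (c γ : ℝ) ≠ 0 := by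
    by_contra! h
    exact hβI (hβc ▸ (sum_smul_mem_span_iff hI _).mpr h)
  rw [Finset.mem_sdiff] at hγ
  refine mem_posRoots_of_coeff_pos hβx (f := fun α => c α + g α) ?_ hγ.1 ?_
  · rw [← hxg, Finset.sum_subset hI fun α _ hα => by rw [hg0 α hα, zero_smul], hβc]
    simp only [add_smul, Finset.sum_add_distrib]
  · rw [hg0 γ hγ.2, add_zero]
    exact lt_of_le_of_ne (by exact_mod_cast hc γ hγ.1) hcγ.symm

lemma sref_mem_posRoots (hγ : γ ∈ Φ.simple) (hβ : β ∈ Φ.posRoots) (hne : β ≠ γ) :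
    sref γ β ∈ Φ.posRoots := by
  have hβγ : β ∉ ℝ ∙ γ := by
    intro h
    obtain ⟨t, rfl⟩ := Submodule.mem_span_singleton.mp h
    rcases Φ.reduced γ (Φ.simple_subset hγ) t (mem_roots_of_mem_posRoots hβ) with rfl | rfl
    · exact hne (one_smul ℝ γ)
    · exact neg_notMem_posRoots (mem_posRoots_of_mem_simple hγ) (neg_one_smul ℝ γ ▸ hβ)
  have hroot := Φ.reflect_mem γ (Φ.simple_subset hγ) β (mem_roots_of_mem_posRoots hβ)
  rw [sref, sub_eq_add_neg] at hroot ⊢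
  refine add_mem_posRoots (I := {γ}) (by simpa using hγ) hβ (by simpa using hβγ) ?_ hroot
  rw [Finset.coe_singleton]
  exact Submodule.neg_mem _ (Submodule.smul_mem _ _ (Submodule.mem_span_singleton_self γ))

lemma sref_mem_posRootsOf (hI : I ⊆ Φ.simple) (hγ : γ ∈ I) (hβ : β ∈ Φ.posRootsOf I)
    (hne : β ≠ γ) : sref γ β ∈ Φ.posRootsOf I := by
  rw [mem_posRootsOf_iff hI] at hβ ⊢
  exact ⟨sref_mem_posRoots (hI hγ) hβ.1 hne,
    Submodule.sub_mem _ hβ.2 (Submodule.smul_mem _ _ (Submodule.subset_span hγ))⟩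

/-- `s_α` permutes `R_I⁺ \ {α}` and negates `α`, so it lowers `∑ R_I⁺` by `2α`. -/
lemma cpair_sum_posRootsOf (hI : I ⊆ Φ.simple) (hα : α ∈ I) :
    cpair (∑ γ ∈ Φ.posRootsOf I, γ) α = 2 := by
  classical
  set S := Φ.posRootsOf I
  have hα0 : α ≠ 0 := ne_zero_of_mem_roots (Φ.simple_subset (hI hα))
  have hαS : α ∈ S := mem_posRootsOf_of_mem hI hα
  have hperm : ∑ γ ∈ S.erase α, sref α γ = ∑ γ ∈ S.erase α, γ := by
    refine Finset.sum_apply_eq_sum_self (fun γ hγ => ?_)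
      (fun x _ y _ h => by simpa only [sref_sref] using congrArg (sref α) h)
    obtain ⟨hγα, hγS⟩ := Finset.mem_erase.mp hγ
    refine Finset.mem_erase.mpr ⟨fun h => ?_, sref_mem_posRootsOf hI hα hγS hγα⟩
    have : γ = -α := by rw [← sref_sref α γ, h, sref_self hα0]
    exact neg_notMem_posRoots (mem_posRoots_of_mem_posRootsOf hαS)
      (this ▸ mem_posRoots_of_mem_posRootsOf hγS)
  have hsum : sref α (∑ γ ∈ S, γ) = ∑ γ ∈ S, γ - (2 : ℝ) • α := by
    rw [← coe_srefLinearIsometry, map_sum, coe_srefLinearIsometry, ← Finset.add_sum_erase S _ hαS,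
      hperm, sref_self hα0, ← Finset.add_sum_erase S (fun γ => γ) hαS]
    module
  rw [sref, sub_right_inj] at hsum
  exact smul_left_injective ℝ hα0 hsum

lemma MemWeyl.apply_mem_roots (hI : I ⊆ Φ.simple) {w : V → V} (hw : MemWeyl I w)
    (hβ : β ∈ Φ.roots) : w β ∈ Φ.roots := by
  obtain ⟨l, hl, rfl⟩ := hw
  induction l with
  | nil => exact hβ
  | cons γ l ih =>
    exact Φ.reflect_mem γ (Φ.simple_subset (hI (hl γ List.mem_cons_self))) _
      (ih fun α h => hl α (List.mem_cons_of_mem γ h))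

lemma exists_wordProd_eraseIdx_eq_comp_sref {l : List V} (hl : ∀ γ ∈ l, γ ∈ Φ.simple)
    (hα : α ∈ Φ.simple) (h : wordProd l α ∉ Φ.posRoots) :
    ∃ i < l.length, wordProd (l.eraseIdx i) = wordProd l ∘ sref α := by
  induction l with
  | nil => exact absurd (mem_posRoots_of_mem_simple hα) h
  | cons γ l ih =>
    by_cases hpos : wordProd l α ∈ Φ.posRoots
    · have heq : wordProd l α = γ := by
        by_contra hne
        exact h (sref_mem_posRoots (hl γ List.mem_cons_self) hpos hne)
      obtain ⟨f, hf⟩ := exists_linearIsometry_eq_wordProd l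
      refine ⟨0, by simp, funext fun v => ?_⟩
      rw [List.eraseIdx_cons_zero, wordProd_cons, Function.comp_apply, Function.comp_apply, ← hf,
        f.map_sref, hf, heq, sref_sref]
    · obtain ⟨i, hi, hw⟩ := ih (fun δ hδ => hl δ (List.mem_cons_of_mem γ hδ)) hpos
      refine ⟨i + 1, by simpa using hi, ?_⟩
      rw [List.eraseIdx_cons_succ, wordProd_cons, wordProd_cons, hw]
      rfl

lemma lengthWeyl_lt_lengthWeyl_comp_sref (hI : I ⊆ Φ.simple) {w : V → V} (hw : MemWeyl I w)
    (hα : α ∈ I) (h : w α ∈ Φ.posRoots) : lengthWeyl I w < lengthWeyl I (w ∘ sref α) := by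
  obtain ⟨f, rfl⟩ := hw.exists_linearIsometry
  obtain ⟨l, hl, hlw, hlen⟩ := (hw.comp_sref hα).exists_reduced_word
  have hneg : wordProd l α ∉ Φ.posRoots := by
    rw [hlw, Function.comp_apply, sref_self (ne_zero_of_mem_roots (Φ.simple_subset (hI hα))),
      map_neg]
    exact neg_notMem_posRoots h
  obtain ⟨i, hi, hli⟩ :=
    exists_wordProd_eraseIdx_eq_comp_sref (fun γ hγ => hI (hl γ hγ)) (hI hα) hneg
  have hf : wordProd (l.eraseIdx i) = f := by
    rw [hli, hlw]
    funext v
    simp only [Function.comp_apply, sref_sref]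
  have hle := lengthWeyl_wordProd_le (I := I) (l := l.eraseIdx i)
    fun γ hγ => hl γ (List.mem_of_mem_eraseIdx hγ)
  rw [hf, List.length_eraseIdx_of_lt hi] at hle
  omega

lemma mem_hull_of_mem_posRootsOf (hI : I ⊆ Φ.simple) (hβ : β ∈ Φ.posRootsOf I) :
    β ∈ PointedCone.hull ℝ (I : Set V) := by
  classical
  obtain ⟨hβpos, hspan⟩ := (mem_posRootsOf_iff hI).mp hβ
  obtain ⟨-, c, hc, hβc⟩ := mem_posRoots.mp hβpos
  rw [hβc, sum_smul_mem_span_iff hI] at hspan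
  rw [hβc, ← Finset.sum_subset hI fun α hα hαI => by
    rw [hspan α (Finset.mem_sdiff.mpr ⟨hα, hαI⟩), zero_smul]]
  exact Submodule.sum_mem _ fun α hα =>
    Submodule.smul_mem _ (⟨c α, by exact_mod_cast hc α (hI hα)⟩ : {t : ℝ // 0 ≤ t})
      (PointedCone.subset_hull hα)

lemma mem_posRootsOf_of_mem_hull (hI : I ⊆ Φ.simple) (hβ : β ∈ Φ.roots)
    (h : β ∈ PointedCone.hull ℝ (I : Set V)) : β ∈ Φ.posRootsOf I := by
  obtain ⟨c, hcI, hc, hβc⟩ := PointedCone.mem_hull_set.mp h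
  rw [Finsupp.sum_of_support_subset c (Finset.coe_subset.mp hcI) (fun m r => r • m)
    fun _ _ => zero_smul ℝ _] at hβc
  obtain ⟨γ, hγ, hcγ⟩ := Finset.exists_ne_zero_of_sum_ne_zero (hβc ▸ ne_zero_of_mem_roots hβ)
  refine (mem_posRootsOf_iff hI).mpr
    ⟨mem_posRoots_of_coeff_pos hβ (f := c) ?_ (hI hγ) ?_, PointedCone.hull_le_span ℝ _ h⟩
  · rw [← hβc]
    exact Finset.sum_subset hI fun α _ hα => by
      rw [Finsupp.notMem_support_iff.mp fun h => hα (Finset.coe_subset.mp hcI h), zero_smul]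
  · exact lt_of_le_of_ne (hc γ) fun h => hcγ (by rw [← h, zero_smul])

namespace IsLongest

variable {w : V → V}

lemma apply_notMem_posRoots (hI : I ⊆ Φ.simple) (hw : IsLongest I w) (hα : α ∈ I) :
    w α ∉ Φ.posRoots := fun h =>
  (lengthWeyl_lt_lengthWeyl_comp_sref hI hw.1 hα h).not_ge (hw.2 _ (hw.1.comp_sref hα))

lemma neg_apply_mem_posRootsOf_of_mem (hI : I ⊆ Φ.simple) (hw : IsLongest I w) (hα : α ∈ I) :
    -w α ∈ Φ.posRootsOf I := by
  have hspan : w α ∈ Submodule.span ℝ (I : Set V) := by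
    simpa using Submodule.add_mem _ (hw.1.apply_sub_mem_span α) (Submodule.subset_span hα)
  rw [mem_posRootsOf_iff hI]
  exact ⟨neg_mem_posRoots_of_notMem (hw.1.apply_mem_roots hI (Φ.simple_subset (hI hα)))
    (hw.apply_notMem_posRoots hI hα), Submodule.neg_mem _ hspan⟩

/-- `-w` maps the simple roots of `I` into `R_I⁺`, hence the cone they span into itself. -/
lemma neg_apply_mem_posRootsOf (hI : I ⊆ Φ.simple) (hw : IsLongest I w)
    (hγ : γ ∈ Φ.posRootsOf I) : -w γ ∈ Φ.posRootsOf I := by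
  obtain ⟨f, rfl⟩ := hw.1.exists_linearIsometry
  have hcone : ∀ v ∈ PointedCone.hull ℝ (I : Set V), -f v ∈ PointedCone.hull ℝ (I : Set V) := by
    intro v hv
    induction hv using Submodule.span_induction with
    | mem x hx => exact mem_hull_of_mem_posRootsOf hI (hw.neg_apply_mem_posRootsOf_of_mem hI hx)
    | zero => simp
    | add x y _ _ hx hy =>
      rw [map_add, neg_add]
      exact Submodule.add_mem _ hx hy
    | smul t x _ hx =>
      rw [← Nonneg.coe_smul, map_smul, ← smul_neg, Nonneg.coe_smul]
      exact Submodule.smul_mem _ t hx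
  exact mem_posRootsOf_of_mem_hull hI (neg_mem_roots (hw.1.apply_mem_roots hI
    (mem_roots_of_mem_posRoots (mem_posRoots_of_mem_posRootsOf hγ))))
    (hcone γ (mem_hull_of_mem_posRootsOf hI hγ))

lemma apply_sum_posRootsOf (hI : I ⊆ Φ.simple) (hw : IsLongest I w) :
    w (∑ γ ∈ Φ.posRootsOf I, γ) = -∑ γ ∈ Φ.posRootsOf I, γ := by
  obtain ⟨f, rfl⟩ := hw.1.exists_linearIsometry
  have := Finset.sum_apply_eq_sum_self (f := fun γ => -f γ)
    (fun γ hγ => hw.neg_apply_mem_posRootsOf hI hγ) fun x _ y _ h => f.injective (neg_inj.mp h)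
  rw [Finset.sum_neg_distrib] at this
  rw [map_sum, ← this, neg_neg]

end IsLongest

lemma cpair_sum_fundamentalWeights [DecidableEq V] (hI : I ⊆ Φ.simple) {ϖ : V → V}
    (hϖ : Φ.IsFundamentalWeights ϖ) (hα : α ∈ Φ.simple) :
    cpair (∑ δ ∈ I, ϖ δ) α = if α ∈ I then 1 else 0 := by
  rw [cpair_sum_left, Finset.sum_congr rfl fun δ hδ => hϖ δ (hI hδ) α hα, Finset.sum_ite_eq']

lemma cpair_sum_fundamentalWeights_eq_zero_iff [DecidableEq V] (hI : I ⊆ Φ.simple) {ϖ : V → V}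
    (hϖ : Φ.IsFundamentalWeights ϖ) (hγ : γ ∈ Φ.posRoots) :
    cpair (∑ δ ∈ I, ϖ δ) γ = 0 ↔ γ ∈ Φ.posRootsOf (Φ.simple \ I) := by
  obtain ⟨-, c, hc, hγc⟩ := mem_posRoots.mp hγ
  have hterm : ∀ α ∈ Φ.simple, ⟪∑ δ ∈ I, ϖ δ, (c α : ℝ) • α⟫ =
      if α ∈ I then (c α : ℝ) * (⟪α, α⟫ / 2) else 0 := fun α hα => by
    rw [real_inner_smul_right, real_inner_eq_cpair_mul, cpair_sum_fundamentalWeights hI hϖ hα]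
    split_ifs <;> ring
  rw [mem_posRootsOf_iff Finset.sdiff_subset, and_iff_right hγ, cpair_eq_zero_iff_inner_eq_zero,
    hγc, sum_smul_mem_span_iff Finset.sdiff_subset, inner_sum, Finset.sum_congr rfl hterm,
    Finset.sum_ite_mem, Finset.inter_eq_right.mpr hI, Finset.sdiff_sdiff_eq_self hI,
    Finset.sum_eq_zero_iff_of_nonneg fun α hα =>
      mul_nonneg (by exact_mod_cast hc α (hI hα)) (div_nonneg real_inner_self_nonneg two_pos.le)]
  refine forall₂_congr fun α hα => ?_
  simp [ne_zero_of_mem_roots (Φ.simple_subset (hI hα))]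

end Roots

end RCRS

/-- For a subset `I ⊆ S`, the longest element `w_{0,P}` of `W_P`, and
`β ∈ R⁺ \ R_I⁺`, one has `⟨Σ_{α ∈ I} ϖ_α − Σ_{γ ∈ R_I⁺} γ, β∨⟩ = 0` if and only if
`w_{0,P}(β) ∈ R_{S\I}⁺`. -/
theorem cpair_eq_zero_iff {V : Type*} [NormedAddCommGroup V] [InnerProductSpace ℝ V] [DecidableEq V]
    (Φ : RCRS V)
    (I : Finset V) (hI : I ⊆ Φ.simple)
    (ϖ : V → V) (hϖ : Φ.IsFundamentalWeights ϖ)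
    (w0P : V → V) (hw0P : RCRS.IsLongest I w0P) :
    ∀ β ∈ Φ.posRoots \ Φ.posRootsOf I,
      (cpair ((∑ α ∈ I, ϖ α) - ∑ γ ∈ Φ.posRootsOf I, γ) β = 0 ↔
        w0P β ∈ Φ.posRootsOf (Φ.simple \ I)) := by
  intro β hβ
  obtain ⟨hβpos, hβI⟩ := Finset.mem_sdiff.mp hβ
  obtain ⟨f, rfl⟩ := hw0P.1.exists_linearIsometry
  set W := ∑ α ∈ I, ϖ α
  set ρ := ∑ γ ∈ Φ.posRootsOf I, γ
  have hfix : f ((2 : ℝ) • W - ρ) = (2 : ℝ) • W - ρ := hw0P.1.apply_eq_self fun α hα => by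
    rw [cpair_sub_left, cpair_smul_left, RCRS.cpair_sum_fundamentalWeights hI hϖ (hI hα),
      if_pos hα, RCRS.cpair_sum_posRootsOf hI hα]
    norm_num
  have hW : f (W - ρ) = W := by
    have h2 : (2 : ℝ) • f (W - ρ) = (2 : ℝ) • W := by
      rw [← map_smul, show (2 : ℝ) • (W - ρ) = ((2 : ℝ) • W - ρ) - ρ by module, map_sub, hfix,
        hw0P.apply_sum_posRootsOf hI]
      module
    exact smul_right_injective V two_ne_zero h2
  have hfβ : f β ∈ Φ.posRoots := by
    have hroot : β + (f β - β) ∈ Φ.roots := by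
      rw [add_sub_cancel]
      exact hw0P.1.apply_mem_roots hI (RCRS.mem_roots_of_mem_posRoots hβpos)
    simpa using RCRS.add_mem_posRoots hI hβpos
      (fun h => hβI ((RCRS.mem_posRootsOf_iff hI).mpr ⟨hβpos, h⟩))
      (hw0P.1.apply_sub_mem_span β) hroot
  rw [← f.cpair_map, hW]
  exact RCRS.cpair_sum_fundamentalWeights_eq_zero_iff hI hϖ hfβ
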